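/- arXiv:2111.11308 — 2 statements merged into one kernel-verified Lean document; each statement's English description precedes it below -/
import Mathlib

section
/- Let a > 0, b ∈ ℝ, and let 0 < β_in < β_ex < π, α_in ∈ (0, π/2), α_ex ∈ (0, π/2) with α_in + β_in ∈ (0, π) and β_ex − α_ex ∈ (0, π). Assume: a·cosh((cos β_in − b)/a) = sin β_in and sinh((cos β_in − b)/a) = −cot(α_in + β_in); a·cosh((cos β_ex − b)/a) = sin β_ex and sinh((cos β_ex − b)/a) = −cot(β_ex − α_ex); and (a·cosh((y − b)/a))² + y² ≤ 1 for all y ∈ [cos β_ex, cos β_in]. Then sgn(α_in − α_ex) = sgn(b) = sgn(π − β_in − β_ex). -/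
/-!
Parametrise the catenary by `t = (y - b) / a`, i.e. as `t ↦ (a cosh t, b + a t)`, with tangent
`(sinh t, 1)`. At a crossing with the unit circle, `sin α · cosh t` and `cos α · cosh t` are the
inner and cross products of the point with the tangent. Write the two crossings as `t = d - σ`
and `t = -d - σ` with `d > 0`. Subtracting the two circle equations gives
`d (b - a σ) = a cosh d sinh d cosh σ sinh σ`, so `σ`, `b` and the mean height
`b - a σ = (cos βin + cos βex) / 2` of the crossings share their sign. A direct computation gives
`d cosh t₁ cosh t₂ (sin αin - sin αex)
  = 2 a sinh σ (cosh d sinh d - d) (cosh d cosh² σ - d sinh d)`,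
and the last factor is positive: otherwise an inequality between `cosh` and `sinh` would make
the inward angle (if `σ ≥ 0`), or by the reflection `y ↦ -y` the outward angle (if `σ ≤ 0`),
non-acute.
-/

open Real

namespace Real

theorem sign_mul (x y : ℝ) : Real.sign (x * y) = Real.sign x * Real.sign y := by
  rcases lt_trichotomy x 0 with hx | rfl | hx <;> rcases lt_trichotomy y 0 with hy | rfl | hy <;>
    simp [sign_of_pos, sign_of_neg, *, mul_pos_of_neg_of_neg, mul_neg_of_neg_of_pos,
      mul_neg_of_pos_of_neg]

theorem sign_add_of_sign_eq {x y : ℝ} (h : Real.sign x = Real.sign y) :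
    Real.sign (x + y) = Real.sign x := by
  rcases lt_trichotomy x 0 with hx | rfl | hx <;> rcases lt_trichotomy y 0 with hy | rfl | hy <;>
    simp only [sign_of_neg, sign_of_pos, sign_zero, add_zero, zero_add, *] at h ⊢
  all_goals first
    | exact sign_of_neg (add_neg ‹_› ‹_›)
    | exact sign_of_pos (add_pos ‹_› ‹_›)
    | norm_num at h

theorem sign_sub_eq_of_strictMonoOn {f : ℝ → ℝ} {s : Set ℝ} (hf : StrictMonoOn f s)
    {x y : ℝ} (hx : x ∈ s) (hy : y ∈ s) : Real.sign (f x - f y) = Real.sign (x - y) := by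
  rcases lt_trichotomy x y with h | rfl | h
  · rw [sign_of_neg (sub_neg.2 (hf hx hy h)), sign_of_neg (sub_neg.2 h)]
  · simp
  · rw [sign_of_pos (sub_pos.2 (hf hy hx h)), sign_of_pos (sub_pos.2 h)]

theorem sign_sub_eq_of_strictAntiOn {f : ℝ → ℝ} {s : Set ℝ} (hf : StrictAntiOn f s)
    {x y : ℝ} (hx : x ∈ s) (hy : y ∈ s) : Real.sign (f x - f y) = Real.sign (y - x) := by
  simpa [neg_add_eq_sub] using sign_sub_eq_of_strictMonoOn hf.neg hy hx

theorem sign_sinh (x : ℝ) : Real.sign (sinh x) = Real.sign x := by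
  simpa using sign_sub_eq_of_strictMonoOn (sinh_strictMono.strictMonoOn Set.univ)
    (Set.mem_univ x) (Set.mem_univ 0)

theorem cosh_sq_sub_cosh_sq (x y : ℝ) :
    cosh x ^ 2 - cosh y ^ 2 = sinh (x + y) * sinh (x - y) := by
  rw [sinh_add, sinh_sub]
  linear_combination (1 + sinh y ^ 2) * cosh_sq x - (1 + sinh x ^ 2) * cosh_sq y

theorem sin_mul_cosh_eq_one_of_sinh_eq_neg_cot {θ t : ℝ} (hθ : θ ∈ Set.Ioo 0 π)
    (h : sinh t = -cot θ) : sin θ * cosh t = 1 ∧ cos θ * cosh t = -sinh t := by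
  have hsin : 0 < sin θ := sin_pos_of_pos_of_lt_pi hθ.1 hθ.2
  have hcos : cos θ = -sinh t * sin θ := by
    rw [h, cot_eq_cos_div_sin]
    field_simp
  have hsq : (sin θ * cosh t) ^ 2 = 1 := by
    linear_combination sin θ ^ 2 * cosh_sq t + (sinh t * sin θ - cos θ) * hcos +
      sin_sq_add_cos_sq θ
  have hone : sin θ * cosh t = 1 := by
    nlinarith [mul_pos hsin (cosh_pos t)]
  exact ⟨hone, by linear_combination cosh t * hcos - sinh t * hone⟩

end Real

section HyperbolicInequality

variable {d σ : ℝ}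

theorem sinh_mul_cosh_sub_le (hd : 0 < d) (hσ : 0 ≤ σ)
    (h : cosh d * cosh σ ^ 2 ≤ d * sinh d) :
    sinh d * cosh (d - σ) ≤ 2 * cosh d * cosh σ ^ 2 * sinh (d - σ) := by
  rw [cosh_sub, sinh_sub]
  set p := cosh d
  set q := sinh d
  set r := cosh σ
  set τ := sinh σ
  have hp : 1 ≤ p := one_le_cosh d
  have hr : 1 ≤ r := one_le_cosh σ
  have hτ : 0 ≤ τ := sinh_nonneg_iff.2 hσ
  have hp2 : p ^ 2 = 1 + q ^ 2 := cosh_sq' d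
  have hr2 : r ^ 2 = 1 + τ ^ 2 := cosh_sq' σ
  have hdq : d ≤ q := (self_lt_sinh_iff.2 hd).le
  have hq : 1 ≤ q := by nlinarith
  have hpq : 2 * p ≤ 2 * q + 1 := by nlinarith
  have hfactor : 0 ≤ 2 * q * r ^ 2 - 2 * p * r * τ - q + r * τ := by
    nlinarith [mul_nonneg (by linarith : 0 ≤ q) (sq_nonneg (r - τ)),
      mul_nonneg (mul_nonneg (by linarith : 0 ≤ r) hτ) (by linarith : 0 ≤ 2 * q - 2 * p + 1)]
  have hτq : p * r ^ 2 * τ ≤ q ^ 2 * τ := mul_le_mul_of_nonneg_right (by nlinarith) hτ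
  nlinarith [mul_nonneg (mul_nonneg (by linarith : 0 ≤ p) (by linarith : 0 ≤ r)) hfactor]

theorem mul_cosh_sub_le (hd : 0 < d) (hσ : 0 ≤ σ) (h : cosh d * cosh σ ^ 2 ≤ d * sinh d) :
    d * cosh (d - σ) ≤ sinh (d - σ) * (d ^ 2 + cosh d * sinh d * (cosh σ * sinh σ)) := by
  have hA := sinh_mul_cosh_sub_le hd hσ h
  have hC := cosh_pos (d - σ)
  simp only [cosh_sub, sinh_sub] at hA hC ⊢
  set p := cosh d
  set q := sinh d
  set r := cosh σ
  set τ := sinh σ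
  have hp : 1 ≤ p := one_le_cosh d
  have hq : 0 < q := sinh_pos_iff.2 hd
  have hp2 : p ^ 2 = 1 + q ^ 2 := cosh_sq' d
  have hr2 : r ^ 2 = 1 + τ ^ 2 := cosh_sq' σ
  have hdq : d ≤ q := (self_lt_sinh_iff.2 hd).le
  have hrq : r ^ 2 ≤ q ^ 2 := by nlinarith
  have hS : 0 < q * r - p * τ :=
    pos_of_mul_pos_right ((mul_pos hq hC).trans_le hA) (by positivity)
  have T₁ : 0 ≤ p ^ 2 * r * τ * (q ^ 2 - r ^ 2) * (p * r - q * τ) := by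
    have := sub_nonneg.2 hrq
    positivity
  have T₂ : 0 ≤ (d * q - p * r ^ 2) *
      ((q * r - p * τ) * (d * q + p * r ^ 2) - q * (p * r - q * τ)) :=
    mul_nonneg (by linarith) (by nlinarith)
  have hid : q ^ 2 * ((q * r - p * τ) * (d ^ 2 + p * q * (r * τ)) - d * (p * r - q * τ)) =
      p ^ 2 * r * τ * (q ^ 2 - r ^ 2) * (p * r - q * τ) +
        (d * q - p * r ^ 2) * ((q * r - p * τ) * (d * q + p * r ^ 2) - q * (p * r - q * τ)) := by
    linear_combination
      (q * r ^ 5 - q * r ^ 3 - q * τ ^ 2 * r ^ 3 - q ^ 2 * τ * p * r ^ 2) * hp2 +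
        (q * r ^ 3 + q ^ 3 * r ^ 3) * hr2
  nlinarith [pow_pos hq 2]

end HyperbolicInequality

section Catenary

variable {a b d σ : ℝ}

/-- The inner product of the point `(a cosh t, b + a t)` of the catenary with its tangent
`(sinh t, 1)`; `catenaryCross` is their cross product. -/
noncomputable def catenaryDot (a b t : ℝ) : ℝ := a * cosh t * sinh t + (b + a * t)

noncomputable def catenaryCross (a b t : ℝ) : ℝ := a * cosh t - (b + a * t) * sinh t

theorem catenary_unit_circle_crossing {α β t : ℝ} (hα : α ∈ Set.Ioo (-(π / 2)) (π / 2))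
    (hθ : α + β ∈ Set.Ioo 0 π) (hx : a * cosh t = sin β) (hy : b + a * t = cos β)
    (hcot : sinh t = -cot (α + β)) :
    (a * cosh t) ^ 2 + (b + a * t) ^ 2 = 1 ∧ catenaryDot a b t = sin α * cosh t ∧
      0 < catenaryCross a b t := by
  obtain ⟨hs, hc⟩ := sin_mul_cosh_eq_one_of_sinh_eq_neg_cot hθ hcot
  have hα' : α = α + β - β := by ring
  refine ⟨by rw [hx, hy, sin_sq_add_cos_sq], ?_, ?_⟩
  · rw [catenaryDot, hx, hy, hα', sin_sub]
    linear_combination sin β * hc - cos β * hs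
  · have hcos : cos α * cosh t = catenaryCross a b t := by
      rw [catenaryCross, hx, hy, hα', cos_sub]
      linear_combination cos β * hc + sin β * hs
    exact hcos ▸ mul_pos (cos_pos_of_mem_Ioo hα) (cosh_pos t)

theorem catenary_chord_midheight (ha : 0 < a)
    (h₁ : (a * cosh (d - σ)) ^ 2 + (b + a * (d - σ)) ^ 2 = 1)
    (h₂ : (a * cosh (-d - σ)) ^ 2 + (b + a * (-d - σ)) ^ 2 = 1) :
    d * (b - a * σ) = a * (cosh d * sinh d) * (cosh σ * sinh σ) := by
  have hsq := cosh_sq_sub_cosh_sq (d - σ) (-d - σ)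
  rw [show d - σ + (-d - σ) = -(2 * σ) by ring, show d - σ - (-d - σ) = 2 * d by ring,
    sinh_neg, sinh_two_mul, sinh_two_mul] at hsq
  have h : 4 * a * (d * (b - a * σ) - a * (cosh d * sinh d) * (cosh σ * sinh σ)) = 0 := by
    linear_combination h₁ - h₂ - a ^ 2 * hsq
  have : a ≠ 0 := ha.ne'
  simpa [sub_eq_zero, this] using h

theorem sign_eq_of_catenary_chord_midheight (ha : 0 < a) (hd : 0 < d)
    (h : d * (b - a * σ) = a * (cosh d * sinh d) * (cosh σ * sinh σ)) :
    Real.sign σ = Real.sign b ∧ Real.sign (b - a * σ) = Real.sign b := by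
  have hmid : Real.sign (b - a * σ) = Real.sign σ := by
    have := congrArg Real.sign h
    simpa [Real.sign_mul, sign_of_pos ha, sign_of_pos hd, sign_of_pos (cosh_pos _),
      sign_of_pos (sinh_pos_iff.2 hd), sign_sinh] using this
  have hb : Real.sign b = Real.sign σ := by
    have hσ : Real.sign (a * σ) = Real.sign σ := by simp [Real.sign_mul, sign_of_pos ha]
    rw [← hmid, ← sign_add_of_sign_eq (hmid.trans hσ.symm), sub_add_cancel]
  exact ⟨hb.symm, hmid.trans hb.symm⟩

theorem mul_sinh_lt_of_catenaryCross_pos (ha : 0 < a) (hd : 0 < d) (hσ : 0 ≤ σ)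
    (hmid : d * (b - a * σ) = a * (cosh d * sinh d) * (cosh σ * sinh σ))
    (hcross : 0 < catenaryCross a b (d - σ)) : d * sinh d < cosh d * cosh σ ^ 2 := by
  by_contra! h
  have hle := mul_cosh_sub_le hd hσ h
  have hcross' : d * catenaryCross a b (d - σ) =
      a * (d * cosh (d - σ) -
        sinh (d - σ) * (d ^ 2 + cosh d * sinh d * (cosh σ * sinh σ))) := by
    rw [catenaryCross]
    linear_combination -sinh (d - σ) * hmid
  nlinarith [mul_pos hd hcross]

theorem mul_catenaryDot_mul_cosh_add
    (hmid : d * (b - a * σ) = a * (cosh d * sinh d) * (cosh σ * sinh σ)) :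
    d * (catenaryDot a b (d - σ) * cosh (-d - σ) + catenaryDot a b (-d - σ) * cosh (d - σ)) =
      2 * a * sinh σ * (cosh d * sinh d - d) * (cosh d * cosh σ ^ 2 - d * sinh d) := by
  rw [catenaryDot, catenaryDot, show -d - σ = -(d + σ) by ring, cosh_neg, sinh_neg, cosh_add,
    sinh_add, cosh_sub, sinh_sub]
  linear_combination 2 * cosh d * cosh σ * hmid -
    2 * a * d * sinh σ * cosh d * cosh σ ^ 2 * cosh_sq' d -
      2 * a * d * sinh d ^ 2 * sinh σ * cosh d * cosh_sq' σ

theorem sign_catenaryDot_mul_cosh_add {t₁ t₂ : ℝ} (ha : 0 < a) (ht : t₂ < t₁)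
    (h₁ : (a * cosh t₁) ^ 2 + (b + a * t₁) ^ 2 = 1)
    (h₂ : (a * cosh t₂) ^ 2 + (b + a * t₂) ^ 2 = 1)
    (hc₁ : 0 < catenaryCross a b t₁) (hc₂ : 0 < catenaryCross a b t₂) :
    Real.sign (catenaryDot a b t₁ * cosh t₂ + catenaryDot a b t₂ * cosh t₁) =
        Real.sign b ∧
      Real.sign (b + a * t₁ + (b + a * t₂)) = Real.sign b := by
  obtain ⟨d, σ, rfl, rfl⟩ : ∃ d σ, t₁ = d - σ ∧ t₂ = -d - σ :=
    ⟨(t₁ - t₂) / 2, -(t₁ + t₂) / 2, by ring, by ring⟩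
  have hd : 0 < d := by linarith
  have hmid := catenary_chord_midheight ha h₁ h₂
  obtain ⟨hσb, hmidb⟩ := sign_eq_of_catenary_chord_midheight ha hd hmid
  have hG : d * sinh d < cosh d * cosh σ ^ 2 := by
    rcases le_total 0 σ with hσ | hσ
    · exact mul_sinh_lt_of_catenaryCross_pos ha hd hσ hmid hc₁
    · have hmid' : d * (-b - a * -σ) = a * (cosh d * sinh d) * (cosh (-σ) * sinh (-σ)) := by
        rw [cosh_neg, sinh_neg]
        linear_combination -hmid
      have hc₂' : 0 < catenaryCross a (-b) (d - -σ) := by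
        convert hc₂ using 1
        rw [catenaryCross, catenaryCross, show -d - σ = -(d - -σ) by ring, cosh_neg, sinh_neg]
        ring
      simpa using mul_sinh_lt_of_catenaryCross_pos ha hd (neg_nonneg.2 hσ) hmid' hc₂'
  have hpq : d < cosh d * sinh d := by
    have := self_lt_sinh_iff.2 (by positivity : 0 < 2 * d)
    rw [sinh_two_mul] at this
    linarith
  constructor
  · have h := congrArg Real.sign (mul_catenaryDot_mul_cosh_add hmid)
    rw [Real.sign_mul, sign_of_pos hd, one_mul] at h
    rw [h]
    simp [Real.sign_mul, sign_of_pos two_pos, sign_of_pos ha, sign_of_pos (sub_pos.2 hpq),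
      sign_of_pos (sub_pos.2 hG), sign_sinh, hσb]
  · rw [show b + a * (d - σ) + (b + a * (-d - σ)) = 2 * (b - a * σ) by ring, Real.sign_mul,
      sign_of_pos two_pos, one_mul, hmidb]

end Catenary

theorem catenary_unbalancing_signs_general (a b βin βex αin αex : ℝ) (ha : 0 < a)
    (h1 : 0 < βin) (h2 : βin < βex) (h3 : βex < π)
    (hαin : αin ∈ Set.Ioo 0 (π / 2)) (hαex : αex ∈ Set.Ioo 0 (π / 2))
    (hin0 : αin + βin ∈ Set.Ioo 0 π) (hex0 : βex - αex ∈ Set.Ioo 0 π)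
    (hin1 : a * Real.cosh ((Real.cos βin - b) / a) = Real.sin βin)
    (hin2 : Real.sinh ((Real.cos βin - b) / a) = -Real.cot (αin + βin))
    (hex1 : a * Real.cosh ((Real.cos βex - b) / a) = Real.sin βex)
    (hex2 : Real.sinh ((Real.cos βex - b) / a) = -Real.cot (βex - αex)) :
    Real.sign (αin - αex) = Real.sign b ∧
      Real.sign b = Real.sign (π - βin - βex) := by
  set t₁ := (cos βin - b) / a
  set t₂ := (cos βex - b) / a
  have hy₁ : b + a * t₁ = cos βin := by rw [mul_div_cancel₀ _ ha.ne']; ring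
  have hy₂ : b + a * t₂ = cos βex := by rw [mul_div_cancel₀ _ ha.ne']; ring
  have hβin : βin ∈ Set.Icc 0 π := ⟨h1.le, by linarith⟩
  have hβex : π - βex ∈ Set.Icc 0 π := ⟨by linarith, by linarith⟩
  have ht : t₂ < t₁ := lt_of_mul_lt_mul_left
    (by linarith [strictAntiOn_cos hβin ⟨by linarith, h3.le⟩ h2]) ha.le
  obtain ⟨hcirc₁, hdot₁, hcross₁⟩ := catenary_unit_circle_crossing
    ⟨by linarith [hαin.1], by linarith [hαin.2]⟩ hin0 hin1 hy₁ hin2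
  obtain ⟨hcirc₂, hdot₂, hcross₂⟩ := catenary_unit_circle_crossing (α := -αex)
    ⟨by linarith [hαex.2], by linarith [hαex.1]⟩ (by rwa [neg_add_eq_sub]) hex1 hy₂
    (by rwa [neg_add_eq_sub])
  obtain ⟨hsign, hmean⟩ :=
    sign_catenaryDot_mul_cosh_add ha ht hcirc₁ hcirc₂ hcross₁ hcross₂
  constructor
  · calc Real.sign (αin - αex) = Real.sign (sin αin - sin αex) :=
          (sign_sub_eq_of_strictMonoOn strictMonoOn_sin ⟨by linarith [hαin.1], hαin.2.le⟩
            ⟨by linarith [hαex.1], hαex.2.le⟩).symm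
      _ = Real.sign ((sin αin - sin αex) * (cosh t₁ * cosh t₂)) := by
          rw [Real.sign_mul, sign_of_pos (mul_pos (cosh_pos t₁) (cosh_pos t₂)), mul_one]
      _ = Real.sign b := by
          rw [← hsign, hdot₁, hdot₂, sin_neg]
          ring_nf
  · have h := sign_sub_eq_of_strictAntiOn strictAntiOn_cos hβin hβex
    rw [cos_pi_sub, sub_neg_eq_add] at h
    rw [← hmean, hy₁, hy₂, h, sub_right_comm]

/-- If the catenary `x = a·cosh((y − b)/a)` enters the unit circle at latitude `βin` with
inward angle `αin`, exits at latitude `βex` with outward angle `αex`, and the arc between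
lies in the closed unit disk, then `sgn(αin − αex) = sgn b = sgn(π − βin − βex)`. -/
theorem catenary_unbalancing_signs (a b βin βex αin αex : ℝ) (ha : 0 < a)
    (h1 : 0 < βin) (h2 : βin < βex) (h3 : βex < π)
    (hαin : αin ∈ Set.Ioo 0 (π / 2)) (hαex : αex ∈ Set.Ioo 0 (π / 2))
    (hin0 : αin + βin ∈ Set.Ioo 0 π) (hex0 : βex - αex ∈ Set.Ioo 0 π)
    (hin1 : a * Real.cosh ((Real.cos βin - b) / a) = Real.sin βin)
    (hin2 : Real.sinh ((Real.cos βin - b) / a) = -Real.cot (αin + βin))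
    (hex1 : a * Real.cosh ((Real.cos βex - b) / a) = Real.sin βex)
    (hex2 : Real.sinh ((Real.cos βex - b) / a) = -Real.cot (βex - αex))
    (hdisk : ∀ y ∈ Set.Icc (Real.cos βex) (Real.cos βin),
      (a * Real.cosh ((y - b) / a)) ^ 2 + y ^ 2 ≤ 1) :
    Real.sign (αin - αex) = Real.sign b ∧
      Real.sign b = Real.sign (π - βin - βex) :=
  catenary_unbalancing_signs_general a b βin βex αin αex ha h1 h2 h3 hαin hαex hin0 hex0 hin1 hin2
    hex1 hex2
end

section
/- There exists a unique β ∈ (π/4, 2π/7) such that, setting a := sin β · sin(2β) and b := cos β − a · arcosh(1/sin(2β)), one has a·cosh(b/a) = 1. -/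
open Real

/-- The inverse of `cosh` on `[1, ∞)`. -/
noncomputable def arcosh (x : ℝ) : ℝ := Real.log (x + Real.sqrt (x ^ 2 - 1))

/-! Writing `s = sin β`, `c = cos β`, one has `1 / sin 2β = cosh (log tan β)`, so for `β ≥ π/4`
the arcosh term is `log (s / c)` and `a · cosh (b / a)` collapses to
`s c² e^{1/(2s²)} + s³ e^{-1/(2s²)}`, a function of `s` alone. That function is strictly
decreasing on `(0, 1)` (its derivative has the sign of `e^{1/s²}(2s² - 3s⁴ - 1) + 3s⁴ + s²`,
which is negative because `e^{1/s²} > 1 + 1/s²`), and it exceeds `1` at `s = sin (π/4)` and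
falls below `1` already at `s = 3/4 < sin (2π/7)`. The intermediate value theorem finishes. -/

open Set

theorem StrictAntiOn.existsUnique_mem_Ioo_eq {α δ : Type*} [ConditionallyCompleteLinearOrder α]
    [TopologicalSpace α] [OrderTopology α] [DenselyOrdered α] [LinearOrder δ]
    [TopologicalSpace δ] [OrderClosedTopology δ] {f : α → δ} {a b : α} {y : δ} (hab : a ≤ b)
    (hf : StrictAntiOn f (Icc a b)) (hcont : ContinuousOn f (Icc a b))
    (hy : y ∈ Ioo (f b) (f a)) : ∃! x, x ∈ Ioo a b ∧ f x = y := by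
  obtain ⟨x, hx, rfl⟩ := intermediate_value_Ioo' hab hcont hy
  exact ⟨x, ⟨hx, rfl⟩, fun x' ⟨hx', hfx'⟩ =>
    hf.injOn (Ioo_subset_Icc_self hx') (Ioo_subset_Icc_self hx) hfx'⟩

theorem arcosh_eq_real_arcosh : _root_.arcosh = Real.arcosh := rfl

theorem cosh_log_tan {β : ℝ} (h₀ : 0 < β) (h₁ : β < π / 2) :
    cosh (log (tan β)) = 1 / sin (2 * β) := by
  have hs : 0 < sin β := sin_pos_of_pos_of_lt_pi h₀ (by linarith [pi_pos])
  have hc : 0 < cos β := cos_pos_of_mem_Ioo ⟨by linarith, h₁⟩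
  rw [tan_eq_sin_div_cos, cosh_log (by positivity), sin_two_mul]
  field_simp
  linear_combination sin_sq_add_cos_sq β

theorem one_le_tan {β : ℝ} (h₀ : π / 4 ≤ β) (h₁ : β < π / 2) : 1 ≤ tan β := by
  have hπ := pi_pos
  rw [← tan_pi_div_four]
  exact strictMonoOn_tan.monotoneOn ⟨by linarith, by linarith⟩ ⟨by linarith, h₁⟩ h₀

theorem arcosh_one_div_sin_two_mul {β : ℝ} (h₀ : π / 4 ≤ β) (h₁ : β < π / 2) :
    _root_.arcosh (1 / sin (2 * β)) = log (tan β) := by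
  rw [← cosh_log_tan (by linarith [pi_pos]) h₁, arcosh_eq_real_arcosh,
    arcosh_cosh (log_nonneg (one_le_tan h₀ h₁))]

theorem sin_mem_Ioo_zero_one {x : ℝ} (hx : x ∈ Ioo 0 (π / 2)) : sin x ∈ Ioo 0 1 := by
  refine ⟨sin_pos_of_pos_of_lt_pi hx.1 (by linarith [hx.2, pi_pos]), ?_⟩
  rw [← sin_pi_div_two]
  exact sin_lt_sin_of_lt_of_le_pi_div_two (by linarith [hx.1, pi_pos]) le_rfl hx.2

noncomputable def equatorRadius (v : ℝ) : ℝ :=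
  v * (1 - v ^ 2) * rexp (1 / (2 * v ^ 2)) + v ^ 3 * rexp (-(1 / (2 * v ^ 2)))

theorem catenary_eq_equatorRadius {β : ℝ} (h₀ : π / 4 ≤ β) (h₁ : β < π / 2) :
    (sin β * sin (2 * β)) *
        cosh ((cos β - sin β * sin (2 * β) * _root_.arcosh (1 / sin (2 * β))) /
          (sin β * sin (2 * β))) = equatorRadius (sin β) := by
  have hs : 0 < sin β := sin_pos_of_pos_of_lt_pi (by linarith [pi_pos]) (by linarith)
  have hc : 0 < cos β := cos_pos_of_mem_Ioo ⟨by linarith [pi_pos], h₁⟩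
  have hba : (cos β - sin β * sin (2 * β) * log (sin β / cos β)) / (sin β * sin (2 * β)) =
      1 / (2 * sin β ^ 2) - log (sin β / cos β) := by
    rw [sin_two_mul]
    field_simp
  rw [arcosh_one_div_sin_two_mul h₀ h₁, tan_eq_sin_div_cos, hba, cosh_eq, neg_sub, exp_sub,
    exp_sub, exp_log (by positivity), equatorRadius, exp_neg, sin_two_mul]
  have hE := exp_pos (1 / (2 * sin β ^ 2))
  generalize rexp (1 / (2 * sin β ^ 2)) = E at hE ⊢
  rw [← cos_sq']
  field_simp

theorem hasDerivAt_equatorRadius {v : ℝ} (hv : v ≠ 0) :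
    HasDerivAt equatorRadius ((1 - 3 * v ^ 2 - (1 - v ^ 2) / v ^ 2) * rexp (1 / (2 * v ^ 2)) +
      (3 * v ^ 2 + 1) * rexp (-(1 / (2 * v ^ 2)))) v := by
  have hw : HasDerivAt (fun v : ℝ => 1 / (2 * v ^ 2)) (-(1 / v ^ 3)) v :=
    ((hasDerivAt_const v 1).fun_div ((hasDerivAt_pow 2 v).const_mul 2) (by positivity)).congr_deriv
      (by field_simp; ring)
  have hp : HasDerivAt (fun v : ℝ => v * (1 - v ^ 2)) (1 - 3 * v ^ 2) v :=
    ((hasDerivAt_id v).fun_mul ((hasDerivAt_pow 2 v).const_sub 1)).congr_deriv (by simp; ring)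
  refine ((hp.fun_mul hw.exp).fun_add ((hasDerivAt_pow 3 v).fun_mul hw.fun_neg.exp)).congr_deriv ?_
  field_simp
  ring

theorem equatorRadius_deriv_neg {v : ℝ} (hv : v ∈ Ioo 0 1) :
    (1 - 3 * v ^ 2 - (1 - v ^ 2) / v ^ 2) * rexp (1 / (2 * v ^ 2)) +
      (3 * v ^ 2 + 1) * rexp (-(1 / (2 * v ^ 2))) < 0 := by
  obtain ⟨hv₀, hv₁⟩ := hv
  have hE := exp_pos (1 / (2 * v ^ 2))
  have hE2 : rexp (1 / (2 * v ^ 2)) ^ 2 = rexp (1 / v ^ 2) := by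
    rw [← exp_nat_mul]; congr 1; field_simp; ring
  have hE2_gt : v ^ 2 + 1 < v ^ 2 * rexp (1 / (2 * v ^ 2)) ^ 2 := by
    calc v ^ 2 + 1 = v ^ 2 * (1 / v ^ 2 + 1) := by field_simp; ring
      _ < v ^ 2 * rexp (1 / v ^ 2) := by gcongr; exact add_one_lt_exp (by positivity)
      _ = _ := by rw [hE2]
  rw [exp_neg]
  generalize rexp (1 / (2 * v ^ 2)) = E at hE hE2_gt ⊢
  have hq : 0 < 3 * v ^ 4 - 2 * v ^ 2 + 1 := by nlinarith [sq_nonneg (v ^ 2 - 1)]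
  have hnum : v ^ 2 * ((2 * v ^ 2 - 3 * v ^ 4 - 1) * E ^ 2 + (3 * v ^ 4 + v ^ 2)) < 0 := by
    nlinarith [mul_lt_mul_of_pos_left hE2_gt hq]
  have hform : (1 - 3 * v ^ 2 - (1 - v ^ 2) / v ^ 2) * E + (3 * v ^ 2 + 1) * E⁻¹ =
      ((2 * v ^ 2 - 3 * v ^ 4 - 1) * E ^ 2 + (3 * v ^ 4 + v ^ 2)) / (v ^ 2 * E) := by
    field_simp
    ring
  rw [hform]
  exact div_neg_of_neg_of_pos (neg_of_mul_neg_right hnum (by positivity)) (by positivity)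

theorem continuousOn_equatorRadius : ContinuousOn equatorRadius (Ioo 0 1) :=
  fun _ hv => (hasDerivAt_equatorRadius hv.1.ne').continuousAt.continuousWithinAt

theorem strictAntiOn_equatorRadius : StrictAntiOn equatorRadius (Ioo 0 1) := by
  refine strictAntiOn_of_deriv_neg (convex_Ioo 0 1) continuousOn_equatorRadius fun v hv => ?_
  rw [interior_Ioo] at hv
  rw [(hasDerivAt_equatorRadius hv.1.ne').deriv]
  exact equatorRadius_deriv_neg hv

theorem one_lt_equatorRadius_sin_pi_div_four : 1 < equatorRadius (sin (π / 4)) := by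
  have hsq : (√2 / 2) ^ 2 = 1 / 2 := by rw [div_pow, sq_sqrt zero_le_two]; norm_num
  have hcube : (√2 / 2) ^ 3 = √2 / 4 := by rw [pow_succ, hsq]; ring
  have hexp : (2.7 : ℝ) < rexp 1 := lt_trans (by norm_num) exp_one_gt_d9
  have hsqrt : (1.4 : ℝ) < √2 := by rw [lt_sqrt (by norm_num)]; norm_num
  rw [sin_pi_div_four, equatorRadius, hsq, hcube, exp_neg]
  have hinv : (0.36 : ℝ) < (rexp 1)⁻¹ := by
    rw [lt_inv_comm₀ (by norm_num) (exp_pos 1)]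
    exact lt_trans exp_one_lt_d9 (by norm_num)
  norm_num
  nlinarith [mul_lt_mul'' hsqrt hexp (by norm_num) (by norm_num),
    mul_lt_mul'' hsqrt hinv (by norm_num) (by norm_num)]

theorem three_quarters_lt_sin_two_pi_div_seven : 3 / 4 < sin (2 * π / 7) := by
  rw [← cos_pi_div_two_sub]
  have h := one_sub_sq_div_two_le_cos (x := π / 2 - 2 * π / 7)
  nlinarith [pi_lt_d2, pi_pos]

theorem equatorRadius_three_quarters_lt_one : equatorRadius (3 / 4) < 1 := by
  have hw : 1 / (2 * (3 / 4 : ℝ) ^ 2) = 8 / 9 := by norm_num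
  have hupper := exp_bound' (x := 8 / 9) (by norm_num) (by norm_num) (n := 3) (by norm_num)
  have hlower := sum_le_exp_of_nonneg (x := 8 / 9) (by norm_num) 3
  simp only [Finset.sum_range_succ, Finset.sum_range_zero] at hupper hlower
  norm_num at hupper hlower
  rw [equatorRadius, hw, exp_neg]
  have hinv : (rexp (8 / 9))⁻¹ ≤ 81 / 185 := by
    rw [inv_le_comm₀ (exp_pos _) (by norm_num)]
    linarith
  nlinarith

theorem equatorRadius_sin_two_pi_div_seven_lt_one : equatorRadius (sin (2 * π / 7)) < 1 :=
  have hsin := sin_mem_Ioo_zero_one ⟨by positivity, by linarith [pi_pos]⟩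
  (strictAntiOn_equatorRadius (by norm_num) hsin three_quarters_lt_sin_two_pi_div_seven).trans
    equatorRadius_three_quarters_lt_one

/-- Existence and uniqueness of the first latitude of the balanced configuration
`𝒲[0:3]`: there is a unique `β ∈ (π/4, 2π/7)` such that, with `a = sin β·sin 2β` and
`b = cos β − a·arcosh(1/sin 2β)`, the catenary `x = a·cosh((y − b)/a)` passes through
`(1, 0)`, i.e. `a·cosh(b/a) = 1`. -/
theorem balanced_order3_first_latitude :
    ∃! β : ℝ, β ∈ Set.Ioo (π / 4) (2 * π / 7) ∧
      (Real.sin β * Real.sin (2 * β)) *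
        Real.cosh ((Real.cos β -
            Real.sin β * Real.sin (2 * β) * _root_.arcosh (1 / Real.sin (2 * β))) /
          (Real.sin β * Real.sin (2 * β))) = 1 := by
  have hπ := pi_pos
  have hI : Icc (π / 4) (2 * π / 7) ⊆ Ioo 0 (π / 2) := Icc_subset_Ioo (by linarith) (by linarith)
  have hsin : MapsTo sin (Icc (π / 4) (2 * π / 7)) (Ioo 0 1) :=
    fun _ hx => sin_mem_Ioo_zero_one (hI hx)
  have hanti : StrictAntiOn (equatorRadius ∘ sin) (Icc (π / 4) (2 * π / 7)) :=
    strictAntiOn_equatorRadius.comp_strictMonoOn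
      (strictMonoOn_sin.mono fun _ hx => ⟨by linarith [(hI hx).1], (hI hx).2.le⟩) hsin
  have hcont : ContinuousOn (equatorRadius ∘ sin) (Icc (π / 4) (2 * π / 7)) :=
    continuousOn_equatorRadius.comp continuous_sin.continuousOn hsin
  refine (existsUnique_congr fun β => and_congr_right fun hβ => ?_).mpr
    (hanti.existsUnique_mem_Ioo_eq (by linarith) hcont
      ⟨equatorRadius_sin_two_pi_div_seven_lt_one, one_lt_equatorRadius_sin_pi_div_four⟩)
  rw [catenary_eq_equatorRadius hβ.1.le (by linarith [hβ.2]), Function.comp_apply]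
end
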